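/- For every integer n ≥ 1: ∑_{j=0}^{∞} q^{j^2+j} [2n - j - 2 choose j]'_q = ∑_{r=-∞}^{∞} (-1)^r q^{r(5r+3)/2} [2n choose n - 5r/2 + 3((-1)^r - 1)/4]_q, where [a choose b]'_q equals 1 if a < 0 and b = 0 and equals the usual Gaussian binomial otherwise, and the lower entry on the right is n - 5r/2 for even r and n - (5r+3)/2 for odd r. -/

import Mathlib

/-!
As functions of `m = 2n - 2`, both sides (`fermionic m` and `bosonic (m + 2)` below) satisfy
`f (m + 2) = f (m + 1) + q ^ (m + 2) * f m` with the same two initial values. For the positive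
side this is q-Pascal applied termwise followed by the shift `j ↦ j + 1`. For the alternating
side one lets the upper index `M = 2n` take odd values too and groups the terms `r, r + 1` with
`M - 5r` odd: the defect of the recurrence on such a pair is `W r - W (r + 2)` for an explicit
certificate `W`, which amounts to an eight-term identity between Gaussian binomials following from
q-Pascal and the ratio `[a, k + 1] (1 - q^(k+1)) = [a, k] (1 - q^(a-k))`. Summed over the pairs,
the defect telescopes away.
-/

open Finset

noncomputable section

abbrev F := RatFunc ℚ

/-- The variable `q`, a transcendental element. -/
def q : F := RatFunc.X

/-- `(b;b)_n = ∏_{i=1}^n (1 - b^i)` -/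
def pq (b : F) (n : ℕ) : F := ∏ i ∈ Finset.range n, (1 - b ^ (i + 1))

/-- Gaussian binomial coefficient in base `b`, zero when `k < 0` or `k > a`. -/
def qbin (b : F) (a k : ℤ) : F :=
  if 0 ≤ k ∧ k ≤ a then pq b a.toNat / (pq b k.toNat * pq b (a - k).toNat) else 0

/-- Primed Gaussian binomial: equals 1 when `a < 0` and `k = 0`. -/
def qbin' (b : F) (a k : ℤ) : F :=
  if a < 0 ∧ k = 0 then 1 else qbin b a k

theorem sum_range_two_mul_eq_sum_pairs {β : Type*} [AddCommMonoid β] (f : ℕ → β) (K : ℕ) :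
    ∑ i ∈ range (2 * K), f i = ∑ s ∈ range K, (f (2 * s) + f (2 * s + 1)) := by
  induction K with
  | zero => simp
  | succ K ih =>
    rw [show 2 * (K + 1) = 2 * K + 1 + 1 by ring, sum_range_succ, sum_range_succ, ih,
      sum_range_succ, add_assoc]

theorem finsum_int_eq_sum_range_pairs {β : Type*} [AddCommMonoid β] {f : ℤ → β} (lo : ℤ)
    (K : ℕ) (h : ∀ r, f r ≠ 0 → lo ≤ r ∧ r < lo + 2 * K) :
    ∑ᶠ r, f r = ∑ s ∈ range K, (f (lo + 2 * s) + f (lo + 2 * s + 1)) := by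
  have hinj : Function.Injective fun i : ℕ => lo + i := fun i j hij => by simpa using hij
  have hsupp : Function.support f ⊆ (range (2 * K)).map ⟨_, hinj⟩ := fun r hr => by
    have := h r hr
    simpa using ⟨(r - lo).toNat, by omega, by omega⟩
  rw [finsum_eq_sum_of_support_subset f hsupp, sum_map]
  simpa [add_assoc] using sum_range_two_mul_eq_sum_pairs (fun i => f (lo + i)) K

section GaussianBinomial

variable {b : F}

theorem pq_succ (n : ℕ) : pq b (n + 1) = pq b n * (1 - b ^ (n + 1)) :=
  prod_range_succ _ n

theorem pq_zero : pq b 0 = 1 :=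
  prod_range_zero _

theorem one_sub_pow_ne_zero_of_pq_ne_zero (hb : ∀ n, pq b n ≠ 0) (n : ℕ) :
    1 - b ^ (n + 1) ≠ 0 :=
  right_ne_zero_of_mul (pq_succ n ▸ hb (n + 1))

theorem qbin_eq_zero {a k : ℤ} (h : ¬(0 ≤ k ∧ k ≤ a)) : qbin b a k = 0 :=
  if_neg h

theorem qbin_eq_zero_of_neg {a k : ℤ} (hk : k < 0) : qbin b a k = 0 :=
  qbin_eq_zero (by omega)

theorem qbin_eq_zero_of_lt {a k : ℤ} (h : a < k) : qbin b a k = 0 :=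
  qbin_eq_zero (by omega)

theorem qbin_natCast {i j : ℕ} (h : j ≤ i) :
    qbin b i j = pq b i / (pq b j * pq b (i - j)) := by
  rw [qbin, if_pos ⟨j.cast_nonneg, by exact_mod_cast h⟩, ← Nat.cast_sub h]
  simp only [Int.toNat_natCast]

theorem qbin_zero_right (hb : ∀ n, pq b n ≠ 0) {a : ℤ} (ha : 0 ≤ a) : qbin b a 0 = 1 := by
  lift a to ℕ using ha
  rw [← Nat.cast_zero, qbin_natCast a.zero_le, Nat.sub_zero, pq_zero, one_mul,
    div_self (hb a)]

theorem qbin_self (hb : ∀ n, pq b n ≠ 0) {a : ℤ} (ha : 0 ≤ a) : qbin b a a = 1 := by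
  lift a to ℕ using ha
  rw [qbin_natCast le_rfl, Nat.sub_self, pq_zero, mul_one, div_self (hb a)]

theorem qbin_pascal_natCast (hb : ∀ n, pq b n ≠ 0) (i j : ℕ) :
    qbin b (i + j + 2 : ℕ) (i + 1 : ℕ) =
      qbin b (i + j + 1 : ℕ) (i + 1 : ℕ) + b ^ (j + 1) * qbin b (i + j + 1 : ℕ) i := by
  rw [qbin_natCast (by omega), qbin_natCast (by omega), qbin_natCast (by omega),
    show i + j + 2 - (i + 1) = j + 1 by omega, show i + j + 1 - (i + 1) = j by omega,
    show i + j + 1 - i = j + 1 by omega, pq_succ (i + j + 1), pq_succ i, pq_succ j]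
  have := hb i; have := hb j
  have := one_sub_pow_ne_zero_of_pq_ne_zero hb i
  have := one_sub_pow_ne_zero_of_pq_ne_zero hb j
  field_simp
  ring

theorem qbin_pascal (hb : ∀ n, pq b n ≠ 0) {a : ℤ} (k : ℤ) (ha : 1 ≤ a) :
    qbin b a k = qbin b (a - 1) k + b ^ (a - k) * qbin b (a - 1) (k - 1) := by
  rcases lt_trichotomy k 0 with hk | rfl | hk
  · rw [qbin_eq_zero_of_neg hk, qbin_eq_zero_of_neg hk, qbin_eq_zero_of_neg (by omega),
      mul_zero, add_zero]
  · rw [qbin_zero_right hb (by omega), qbin_zero_right hb (by omega),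
      qbin_eq_zero_of_neg (by omega), mul_zero, add_zero]
  rcases lt_trichotomy k a with hka | rfl | hka
  · obtain ⟨i, rfl⟩ : ∃ i : ℕ, k = i + 1 := ⟨(k - 1).toNat, by omega⟩
    obtain ⟨j, rfl⟩ : ∃ j : ℕ, a = i + j + 2 := ⟨(a - i - 2).toNat, by omega⟩
    have := qbin_pascal_natCast hb i j
    push_cast at this
    rw [this, show (i : ℤ) + j + 2 - 1 = i + j + 1 by ring, add_sub_cancel_right,
      show (i : ℤ) + j + 2 - (i + 1) = (j + 1 : ℕ) by push_cast; ring, zpow_natCast]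
  · rw [qbin_self hb (by omega), qbin_eq_zero_of_lt (by omega), qbin_self hb (by omega),
      sub_self, zpow_zero, zero_add, one_mul]
  · rw [qbin_eq_zero_of_lt hka, qbin_eq_zero_of_lt (by omega), qbin_eq_zero_of_lt (by omega),
      mul_zero, add_zero]

theorem one_sub_pow_mul_qbin_natCast (hb : ∀ n, pq b n ≠ 0) (i j : ℕ) :
    (1 - b ^ (i + 1)) * qbin b (i + j + 1 : ℕ) (i + 1 : ℕ) =
      (1 - b ^ (j + 1)) * qbin b (i + j + 1 : ℕ) i := by
  rw [qbin_natCast (by omega), qbin_natCast (by omega),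
    show i + j + 1 - (i + 1) = j by omega, show i + j + 1 - i = j + 1 by omega,
    pq_succ i, pq_succ j]
  have := hb i; have := hb j
  have := one_sub_pow_ne_zero_of_pq_ne_zero hb i
  have := one_sub_pow_ne_zero_of_pq_ne_zero hb j
  field_simp

theorem one_sub_pow_mul_qbin_succ (hb : ∀ n, pq b n ≠ 0) (a k : ℤ) :
    (1 - b ^ (k + 1)) * qbin b a (k + 1) = (1 - b ^ (a - k)) * qbin b a k := by
  by_cases hk : 0 ≤ k ∧ k < a
  · obtain ⟨i, rfl⟩ : ∃ i : ℕ, k = i := ⟨k.toNat, by omega⟩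
    obtain ⟨j, rfl⟩ : ∃ j : ℕ, a = i + j + 1 := ⟨(a - i - 1).toNat, by omega⟩
    have := one_sub_pow_mul_qbin_natCast hb i j
    push_cast at this
    rw [← zpow_natCast, ← zpow_natCast] at this
    push_cast at this
    rw [this, show (i : ℤ) + j + 1 - i = j + 1 by ring]
  by_cases hk1 : k = -1
  · rw [hk1, qbin_eq_zero_of_neg (show (-1 : ℤ) < 0 by omega), neg_add_cancel, zpow_zero,
      sub_self, zero_mul, mul_zero]
  by_cases hka : k = a
  · rw [hka, qbin_eq_zero_of_lt (by omega), sub_self, zpow_zero, sub_self, zero_mul, mul_zero]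
  rw [qbin_eq_zero (by omega), qbin_eq_zero (by omega), mul_zero, mul_zero]

theorem zpow_eq_of_eq_add (hb0 : b ≠ 0) {X r s : ℤ} (β γ δ : ℕ)
    (h : X = β * r + γ * s + δ) : b ^ X = (b ^ r) ^ β * (b ^ s) ^ γ * b ^ δ := by
  rw [h, zpow_add₀ hb0, zpow_add₀ hb0, mul_comm (β : ℤ), mul_comm (γ : ℤ), zpow_mul,
    zpow_mul, zpow_natCast, zpow_natCast, zpow_natCast]

theorem qbin_telescoping_identity (hb0 : b ≠ 0) (hb : ∀ n, pq b n ≠ 0) {M r t : ℤ}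
    (hM : 0 ≤ M) (hMrt : M = 5 * r + 2 * t - 1) :
    qbin b (M + 2) (t - 1) - b ^ (5 * r + 4) * qbin b (M + 2) (t - 2)
      - qbin b (M + 1) t + b ^ (5 * r + 4) * qbin b (M + 1) (t - 4)
      - b ^ M * qbin b M (t - 2) + b ^ (5 * r + 4) * b ^ M * qbin b M (t - 3)
      + b ^ t * qbin b M t - b ^ (10 * r + 8) * b ^ t * qbin b M (t - 5) = 0 := by
  have h1 := qbin_pascal hb (t - 1) (show 1 ≤ M + 2 by omega)
  have h2 := qbin_pascal hb (t - 2) (show 1 ≤ M + 2 by omega)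
  have h3 := qbin_pascal hb t (show 1 ≤ M + 1 by omega)
  have h4 := qbin_pascal hb (t - 1) (show 1 ≤ M + 1 by omega)
  have h5 := qbin_pascal hb (t - 2) (show 1 ≤ M + 1 by omega)
  have h6 := qbin_pascal hb (t - 3) (show 1 ≤ M + 1 by omega)
  have h7 := qbin_pascal hb (t - 4) (show 1 ≤ M + 1 by omega)
  have r1 := one_sub_pow_mul_qbin_succ hb M (t - 1)
  have r3 := one_sub_pow_mul_qbin_succ hb M (t - 3)
  have r4 := one_sub_pow_mul_qbin_succ hb M (t - 4)
  simp only [show M + 2 - 1 = M + 1 by ring, add_sub_cancel_right, sub_sub, sub_add_cancel,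
    show (1 : ℤ) + 1 = 2 by norm_num, show (2 : ℤ) + 1 = 3 by norm_num,
    show (3 : ℤ) + 1 = 4 by norm_num, show (4 : ℤ) + 1 = 5 by norm_num,
    show t - 3 + 1 = t - 2 by ring, show t - 4 + 1 = t - 3 by ring]
    at h1 h2 h3 h4 h5 h6 h7 r1 r3 r4
  -- Writing every power of `b` through `b ^ r` and `b ^ (t - 3)` turns the claim into a
  -- polynomial identity that `linear_combination` can check.
  have e : ∀ (β γ δ : ℕ) (X : ℤ), X = β * r + γ * (t - 3) + δ →
      b ^ X = (b ^ r) ^ β * (b ^ (t - 3)) ^ γ * b ^ δ :=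
    fun β γ δ _ h => zpow_eq_of_eq_add hb0 β γ δ h
  rw [e 5 1 5 _ (by omega)] at h1
  rw [e 5 1 6 _ (by omega)] at h2 h6
  rw [e 5 1 3 _ (by omega)] at h3
  rw [e 5 1 4 _ (by omega)] at h4
  rw [e 5 1 5 _ (by omega)] at h5
  rw [e 5 1 7 _ (by omega)] at h7
  rw [e 0 1 3 t (by omega), e 5 1 3 (M - (t - 1)) (by omega)] at r1
  rw [e 0 1 1 (t - 2) (by omega), e 5 1 5 (M - (t - 3)) (by omega)] at r3
  rw [e 0 1 0 (t - 3) (by omega), e 5 1 6 (M - (t - 4)) (by omega)] at r4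
  rw [e 5 0 4 (5 * r + 4) (by omega), e 5 2 5 M (by omega), e 0 1 3 t (by omega),
    e 10 0 8 (10 * r + 8) (by omega)]
  set U := b ^ r
  set C := b ^ (t - 3)
  linear_combination h1 - (U ^ 5 * b ^ 4) * h2 - h3 + (U ^ 5 * b ^ 4) * h7 + h4
    + (U ^ 5 * C * b ^ 5 - U ^ 5 * b ^ 4) * h5
    - (U ^ 5 * b ^ 4) * (U ^ 5 * C * b ^ 6) * h6
    - r1 - (U ^ 5 * b ^ 4) * (1 - C) * r3
    - (U ^ 5 * b ^ 4) * (1 + U ^ 5 * C * b ^ 6) * r4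

end GaussianBinomial

theorem q_ne_zero : q ≠ 0 := RatFunc.X_ne_zero

theorem one_sub_q_pow_ne_zero {k : ℕ} (hk : 0 < k) : (1 : F) - q ^ k ≠ 0 := by
  have h := (RatFunc.algebraMap_injective ℚ).ne (Polynomial.X_pow_sub_C_ne_zero hk (1 : ℚ))
  rw [map_sub, map_pow, RatFunc.algebraMap_X, RatFunc.algebraMap_C, map_zero] at h
  rw [← neg_sub, neg_ne_zero]
  simpa [q] using h

theorem pq_q_ne_zero (n : ℕ) : pq q n ≠ 0 :=
  prod_ne_zero_iff.2 fun _ _ => one_sub_q_pow_ne_zero (Nat.succ_pos _)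

def bosonicExp (r : ℤ) : ℤ := r * (5 * r + 3) / 2

/-- For `M = 2n` this is the paper's lower index `n - 5r/2 + 3((-1)^r - 1)/4`. -/
def bosonicIndex (M r : ℤ) : ℤ :=
  if Even (M - 5 * r) then (M - 5 * r) / 2 else (M - 5 * r - 3) / 2

def bosonicTerm (M r : ℤ) : F := (-1) ^ r * q ^ bosonicExp r * qbin q M (bosonicIndex M r)

def bosonic (M : ℕ) : F := ∑ᶠ r : ℤ, bosonicTerm M r

def bosonicCertificate (M r : ℤ) : F :=
  (-1) ^ (r + 1) * q ^ (bosonicExp r + (M - 5 * r + 1) / 2) * qbin q M ((M - 5 * r + 1) / 2)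

theorem two_mul_bosonicExp (r : ℤ) : 2 * bosonicExp r = r * (5 * r + 3) := by
  refine Int.mul_ediv_cancel' ?_
  rcases Int.even_or_odd r with ⟨s, rfl⟩ | ⟨s, rfl⟩
  · exact ⟨s * (10 * s + 3), by ring⟩
  · exact ⟨(2 * s + 1) * (5 * s + 4), by ring⟩

theorem bosonicExp_add_one (r : ℤ) : bosonicExp (r + 1) = bosonicExp r + (5 * r + 4) := by
  have h := two_mul_bosonicExp (r + 1)
  have h' := two_mul_bosonicExp r
  linarith

theorem bosonicExp_add_two (r : ℤ) : bosonicExp (r + 2) = bosonicExp r + (10 * r + 13) := by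
  have h := two_mul_bosonicExp (r + 2)
  have h' := two_mul_bosonicExp r
  linarith

theorem bosonicIndex_spec (M r : ℤ) :
    M - 5 * r = 2 * bosonicIndex M r ∨ M - 5 * r = 2 * bosonicIndex M r + 3 := by
  unfold bosonicIndex
  split_ifs with h <;> rw [Int.even_iff] at h <;> omega

theorem bosonicTerm_eq_zero {M r : ℤ}
    (h : ¬(0 ≤ bosonicIndex M r ∧ bosonicIndex M r ≤ M)) : bosonicTerm M r = 0 := by
  rw [bosonicTerm, qbin_eq_zero h, mul_zero]

theorem bosonicTerm_eq_zero_of_notMem_Ioc {M r : ℤ} (h : 5 * r ∉ Set.Ioc (-(M + 5)) M) :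
    bosonicTerm M r = 0 := by
  rw [Set.mem_Ioc] at h
  exact bosonicTerm_eq_zero (by have := bosonicIndex_spec M r; omega)

theorem bosonicCertificate_eq_zero {M r : ℤ}
    (h : ¬(0 ≤ (M - 5 * r + 1) / 2 ∧ (M - 5 * r + 1) / 2 ≤ M)) :
    bosonicCertificate M r = 0 := by
  rw [bosonicCertificate, qbin_eq_zero h, mul_zero]

theorem bosonicTerm_pair_eq_certificate_sub {M r : ℤ} (hM : 0 ≤ M) (hodd : Odd (M - 5 * r)) :
    (bosonicTerm (M + 2) r - bosonicTerm (M + 1) r - q ^ M * bosonicTerm M r)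
      + (bosonicTerm (M + 2) (r + 1) - bosonicTerm (M + 1) (r + 1)
        - q ^ M * bosonicTerm M (r + 1))
      = bosonicCertificate M r - bosonicCertificate M (r + 2) := by
  obtain ⟨t, ht⟩ : ∃ t, M = 5 * r + 2 * t - 1 := by
    obtain ⟨k, hk⟩ := hodd
    exact ⟨k + 1, by omega⟩
  have index : ∀ a s i, a - 5 * s = 2 * i ∨ a - 5 * s = 2 * i + 3 → bosonicIndex a s = i := by
    intro a s i h
    have := bosonicIndex_spec a s
    omega
  have hn1 : ((-1 : F)) ^ (r + 1) = -(-1) ^ r := by rw [zpow_add_one₀ (by norm_num)]; ring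
  have hn3 : ((-1 : F)) ^ (r + 2 + 1) = -(-1) ^ r := by
    rw [zpow_add_one₀ (by norm_num), zpow_add₀ (by norm_num)]; norm_num
  simp only [bosonicTerm, bosonicCertificate, bosonicExp_add_one, bosonicExp_add_two, hn1, hn3,
    index (M + 2) r (t - 1) (by omega), index (M + 1) r t (by omega),
    index M r (t - 2) (by omega), index (M + 2) (r + 1) (t - 2) (by omega),
    index (M + 1) (r + 1) (t - 4) (by omega), index M (r + 1) (t - 3) (by omega),
    show (M - 5 * r + 1) / 2 = t by omega, show (M - 5 * (r + 2) + 1) / 2 = t - 5 by omega,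
    show bosonicExp r + (10 * r + 13) + (t - 5) = bosonicExp r + ((10 * r + 8) + t) by ring,
    zpow_add₀ q_ne_zero (bosonicExp r), zpow_add₀ q_ne_zero (10 * r + 8) t]
  linear_combination ((-1 : F) ^ r * q ^ bosonicExp r) *
    qbin_telescoping_identity q_ne_zero pq_q_ne_zero hM ht

theorem bosonic_eq_sum_pairs {M : ℕ} {lo : ℤ} {K : ℕ} (hlo : 5 * lo ≤ -(M + 5))
    (hK : M < 5 * (lo + 2 * K)) :
    bosonic M = ∑ s ∈ range K,
      (bosonicTerm M (lo + 2 * s) + bosonicTerm M (lo + 2 * s + 1)) :=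
  finsum_int_eq_sum_range_pairs lo K fun _ hr => by
    by_contra h
    exact hr (bosonicTerm_eq_zero_of_notMem_Ioc (by rw [Set.mem_Ioc]; omega))

theorem bosonic_add_two (M : ℕ) : bosonic (M + 2) = bosonic (M + 1) + q ^ M * bosonic M := by
  -- `M - 5 lo` is odd, and the window is wide enough for the certificate to vanish at both ends.
  set lo : ℤ := -3 * M - 7 with hlo
  set K : ℕ := 2 * M + 5
  suffices bosonic (M + 2) - bosonic (M + 1) - q ^ M * bosonic M = 0 by
    linear_combination this
  rw [bosonic_eq_sum_pairs (lo := lo) (K := K) (by omega) (by omega),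
    bosonic_eq_sum_pairs (lo := lo) (K := K) (by omega) (by omega),
    bosonic_eq_sum_pairs (lo := lo) (K := K) (by omega) (by omega),
    mul_sum, ← sum_sub_distrib, ← sum_sub_distrib]
  have hpair : ∀ s : ℕ,
      bosonicTerm ((M + 2 : ℕ) : ℤ) (lo + 2 * s)
          + bosonicTerm ((M + 2 : ℕ) : ℤ) (lo + 2 * s + 1)
        - (bosonicTerm ((M + 1 : ℕ) : ℤ) (lo + 2 * s)
          + bosonicTerm ((M + 1 : ℕ) : ℤ) (lo + 2 * s + 1))
        - q ^ M * (bosonicTerm M (lo + 2 * s) + bosonicTerm M (lo + 2 * s + 1))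
      = bosonicCertificate M (lo + 2 * s) - bosonicCertificate M (lo + 2 * (s + 1 : ℕ)) := by
    intro s
    have h := bosonicTerm_pair_eq_certificate_sub (M := M) (r := lo + 2 * s) (by omega)
      ⟨8 * M + 17 - 5 * s, by rw [hlo]; ring⟩
    rw [← zpow_natCast, show lo + 2 * ((s + 1 : ℕ) : ℤ) = lo + 2 * s + 2 by push_cast; ring]
    push_cast
    linear_combination h
  rw [sum_congr rfl fun s _ => hpair s,
    sum_range_sub' (fun s : ℕ => bosonicCertificate M (lo + 2 * s)),
    bosonicCertificate_eq_zero (by push_cast; omega), bosonicCertificate_eq_zero (by omega),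
    sub_zero]

theorem bosonic_zero : bosonic 0 = 1 := by
  rw [bosonic, finsum_eq_single _ 0 fun r hr =>
      bosonicTerm_eq_zero_of_notMem_Ioc (by rw [Set.mem_Ioc]; omega),
    bosonicTerm, Nat.cast_zero, show bosonicIndex 0 0 = 0 by decide,
    qbin_zero_right pq_q_ne_zero le_rfl]
  simp [bosonicExp]

theorem bosonic_one : bosonic 1 = 0 := by
  rw [bosonic, ← finsum_zero]
  refine finsum_congr fun r => bosonicTerm_eq_zero ?_
  rw [Nat.cast_one]
  have := bosonicIndex_spec 1 r
  omega

def fermionic (m : ℕ) : F := ∑ᶠ j : ℕ, q ^ (j ^ 2 + j) * qbin q ((m : ℤ) - j) j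

theorem fermionic_eq_sum_range {m N : ℕ} (h : m < 2 * N) :
    fermionic m = ∑ j ∈ range N, q ^ (j ^ 2 + j) * qbin q ((m : ℤ) - j) j := by
  refine finsum_eq_sum_of_support_subset _ fun j hj => ?_
  by_contra hjN
  simp only [coe_range, Set.mem_Iio, not_lt] at hjN
  exact hj (mul_eq_zero_of_right _ (qbin_eq_zero_of_lt (by omega)))

theorem fermionic_add_two (m : ℕ) :
    fermionic (m + 2) = fermionic (m + 1) + q ^ (m + 2) * fermionic m := by
  rw [fermionic_eq_sum_range (N := m + 2) (by omega),
    fermionic_eq_sum_range (N := m + 2) (by omega),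
    fermionic_eq_sum_range (N := m + 1) (by omega), mul_sum]
  have hpascal : ∀ j ∈ range (m + 2), q ^ (j ^ 2 + j) * qbin q ((m + 2 : ℕ) - j : ℤ) j =
      q ^ (j ^ 2 + j) * qbin q ((m + 1 : ℕ) - j : ℤ) j
        + q ^ (j ^ 2 + j) * q ^ ((m + 2 : ℤ) - 2 * j)
          * qbin q ((m + 1 : ℕ) - j : ℤ) (j - 1) := by
    intro j hj
    rw [mem_range] at hj
    rw [qbin_pascal pq_q_ne_zero j (by omega),
      show ((m + 2 : ℕ) : ℤ) - j - 1 = ((m + 1 : ℕ) : ℤ) - j by push_cast; ring,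
      show ((m + 2 : ℕ) : ℤ) - j - j = (m + 2 : ℤ) - 2 * j by push_cast; ring]
    ring
  have hshift : ∀ j : ℕ,
      q ^ ((j + 1) ^ 2 + (j + 1)) * q ^ ((m + 2 : ℤ) - 2 * (j + 1 : ℕ))
        * qbin q ((m + 1 : ℕ) - (j + 1 : ℕ) : ℤ) ((j + 1 : ℕ) - 1) =
      q ^ (m + 2) * (q ^ (j ^ 2 + j) * qbin q ((m : ℤ) - j) j) := by
    intro j
    rw [show (j + 1) ^ 2 + (j + 1) = (j ^ 2 + j) + (2 * j + 2) by ring, pow_add,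
      show ((m + 1 : ℕ) : ℤ) - (j + 1 : ℕ) = m - j by push_cast; ring, Nat.cast_add_one,
      add_sub_cancel_right]
    have hexp : q ^ (2 * j + 2) * q ^ ((m + 2 : ℤ) - 2 * (j + 1)) = q ^ (m + 2) := by
      rw [← zpow_natCast, ← zpow_add₀ q_ne_zero, ← zpow_natCast]
      push_cast
      congr 1
      ring
    linear_combination (q ^ (j ^ 2 + j) * qbin q ((m : ℤ) - j) j) * hexp
  rw [sum_congr rfl hpascal, sum_add_distrib]
  congr 1
  rw [sum_range_succ', sum_congr rfl fun j _ => hshift j, qbin_eq_zero_of_neg (by norm_num),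
    mul_zero, add_zero]

theorem fermionic_zero : fermionic 0 = 1 := by
  rw [fermionic_eq_sum_range (N := 1) (by norm_num), sum_range_one]
  simpa using qbin_zero_right pq_q_ne_zero le_rfl

theorem fermionic_one : fermionic 1 = 1 := by
  rw [fermionic_eq_sum_range (N := 1) (by norm_num), sum_range_one]
  simpa using qbin_zero_right pq_q_ne_zero zero_le_one

theorem fermionic_eq_bosonic (m : ℕ) : fermionic m = bosonic (m + 2) := by
  induction m using Nat.twoStepInduction with
  | zero => simp [bosonic_add_two, bosonic_one, bosonic_zero, fermionic_zero]
  | one => simp [bosonic_add_two, bosonic_one, bosonic_zero, fermionic_one]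
  | more k ih₀ ih₁ => rw [fermionic_add_two, ih₀, ih₁, bosonic_add_two (k + 2)]

theorem stmt9 (n : ℕ) (hn : 1 ≤ n) :
    (∑ᶠ j : ℕ, q ^ (j ^ 2 + j) * qbin' q (2 * (n : ℤ) - j - 2) (j : ℤ)) =
      ∑ᶠ r : ℤ, (-1 : F) ^ r * q ^ (r * (5 * r + 3) / 2) *
        qbin q (2 * (n : ℤ))
          (if Even r then (n : ℤ) - 5 * r / 2 else (n : ℤ) - (5 * r + 3) / 2) := by
  have hL : (∑ᶠ j : ℕ, q ^ (j ^ 2 + j) * qbin' q (2 * (n : ℤ) - j - 2) (j : ℤ)) =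
      fermionic (2 * n - 2) := finsum_congr fun j => by
    rw [qbin', if_neg (by omega), Nat.cast_sub (by omega)]
    push_cast
    congr 2
    ring
  have hR : (∑ᶠ r : ℤ, (-1 : F) ^ r * q ^ (r * (5 * r + 3) / 2) *
      qbin q (2 * (n : ℤ))
        (if Even r then (n : ℤ) - 5 * r / 2 else (n : ℤ) - (5 * r + 3) / 2)) =
      bosonic (2 * n) := finsum_congr fun r => by
    have := bosonicIndex_spec (2 * n) r
    rw [bosonicTerm, bosonicExp]
    push_cast
    congr 2
    split_ifs with h <;> rw [Int.even_iff] at h <;> omega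
  rw [hL, hR, fermionic_eq_bosonic, Nat.sub_add_cancel (by omega)]
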